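/- For every positive integer n and every integer m ≥ α_t − t + 1, one has 𝔡^m(I,n) = N(I,n). -/

import Mathlib

open Finset

/-- Sequences of length `ℓ` (positions `1..ℓ`) with entries in `{1,…,n}`,
encoded as functions `ℕ → ℕ` vanishing outside `[1, ℓ]`. -/
def Seqs (ℓ n : ℕ) : Set (ℕ → ℕ) :=
  {v | (∀ i ∈ Finset.Icc 1 ℓ, v i ∈ Finset.Icc 1 n) ∧ ∀ i, i ∉ Finset.Icc 1 ℓ → v i = 0}

/-- Descent set of a sequence of length `ℓ`:
`Des(v) = {i ∈ {1,…,ℓ-1} : v_i > v_{i+1}}`. -/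
def Des (ℓ : ℕ) (v : ℕ → ℕ) : Set ℕ :=
  {i | 1 ≤ i ∧ i < ℓ ∧ v (i + 1) < v i}

/-- Number of occurrences of the value `j` among positions `1..ℓ` of `v`. -/
def mult (ℓ : ℕ) (v : ℕ → ℕ) (j : ℕ) : ℕ :=
  ((Finset.Icc 1 ℓ).filter fun i => v i = j).card

/-- `𝔡^m(I, n)`: the number of sequences of length `n*m`, in which each of `1,…,n`
appears exactly `m` times, whose descent set is `I`. -/
noncomputable def dP (m : ℕ) (I : Finset ℕ) (n : ℕ) : ℕ :=
  Set.ncard {w ∈ Seqs (n * m) n |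
    Des (n * m) w = ↑I ∧ ∀ j ∈ Finset.Icc 1 n, mult (n * m) w j = m}

/-- `N(I, n)`: the number of sequences `v = (v_1, …, v_{α_t})` with entries in `{1,…,n}`
such that `Des v = I \ {α_t}` and `v_{α_t} ≠ 1`. -/
noncomputable def Ncount (I : Finset ℕ) (n : ℕ) : ℕ :=
  Set.ncard {v ∈ Seqs (I.sup id) n |
    Des (I.sup id) v = ↑(I.erase (I.sup id)) ∧ v (I.sup id) ≠ 1}

/-- `D^m(I, n)`: the number of sequences `v = (v_1, …, v_{α_t})` with entries in `{1,…,n}`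
such that `Des v = I \ {α_t}` and each of `1,…,n` appears at most `m` times in `v`. -/
noncomputable def Dcount (m : ℕ) (I : Finset ℕ) (n : ℕ) : ℕ :=
  Set.ncard {v ∈ Seqs (I.sup id) n |
    Des (I.sup id) v = ↑(I.erase (I.sup id)) ∧ ∀ j ∈ Finset.Icc 1 n, mult (I.sup id) v j ≤ m}

/-- `b_i(I)`: the number of sequences `v = (v_1, …, v_{α_t})` with entries in `{1,…,i+1}`
such that `Des v = I \ {α_t}`, every number in `{2,…,i+1}` occurs in `v`, and `v_{α_t} ≠ 1`. -/
noncomputable def bcoef (I : Finset ℕ) (i : ℕ) : ℕ :=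
  Set.ncard {v ∈ Seqs (I.sup id) (i + 1) |
    Des (I.sup id) v = ↑(I.erase (I.sup id)) ∧
    (∀ l ∈ Finset.Icc 2 (i + 1), ∃ j ∈ Finset.Icc 1 (I.sup id), v j = l) ∧
    v (I.sup id) ≠ 1}

/-- `L(I)`: the length of the longest run of consecutive integers contained in `I`. -/
def longestRun (I : Finset ℕ) : ℕ :=
  I.sup fun a => ((Finset.Icc a (I.sup id)).filter fun b => Finset.Icc a b ⊆ I).card

/-- `alphaVal I k` is the `k`-th smallest element of `I` (`1`-indexed), with `alphaVal I 0 = 0`. -/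
def alphaVal (I : Finset ℕ) (k : ℕ) : ℕ :=
  if k = 0 then 0 else (I.sort (· ≤ ·)).getD (k - 1) 0

/-- For a composition `A = (a_1,…,a_s)` of `t = |I|`, `sigmaC I A i` is
`σ_{i+1} = β_{a_1+⋯+a_i+1} + ⋯ + β_{a_1+⋯+a_{i+1}}`, where `β` is the sequence of first
differences of `(0, α_1, …, α_t)`; by telescoping this equals
`α_{a_1+⋯+a_{i+1}} - α_{a_1+⋯+a_i}`. -/
def sigmaC (I : Finset ℕ) {t : ℕ} (A : Composition t) (i : ℕ) : ℕ :=
  alphaVal I (A.sizeUpTo (i + 1)) - alphaVal I (A.sizeUpTo i)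

/-- `C(A, I)` for a composition `A = (a_1,…,a_r)`: the number of sequences
`v = (v_1, …, v_{α_t})` with entries in `{1,…,r}` such that `Des v = I \ {α_t}`
and the number `j` appears exactly `a_j` times in `v`, for each `j ∈ {1,…,r}`. -/
noncomputable def Ccount (I : Finset ℕ) {N : ℕ} (A : Composition N) : ℕ :=
  Set.ncard {v ∈ Seqs (I.sup id) A.length |
    Des (I.sup id) v = ↑(I.erase (I.sup id)) ∧
    ∀ j ∈ Finset.Icc 1 A.length, mult (I.sup id) v j = A.blocks.getD (j - 1) 0}

/-- The generalized binomial coefficient `C(a, i) = a(a-1)⋯(a-i+1)/i!` for an integer `a`. -/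
def genChoose (a : ℤ) (i : ℕ) : ℚ :=
  (∏ j ∈ Finset.range i, ((a : ℚ) - (j : ℚ))) / (Nat.factorial i)

/-!
Cutting a word counted by `𝔡^m(I, n)` after position `α_t` is a bijection onto the words
counted by `N(I, n)`. The word has no descent after `α_t`, so its tail is the sorted list of the
letters missing from the prefix; hence the cut is injective. Conversely, in a prefix `v` with
`t - 1` descents every letter occurs at most `α_t - t + 1 ≤ m` times, and since `v_{α_t} ≠ 1`
the letter `1` occurs fewer than `m` times. So the missing letters, sorted, complete `v` to a
word with each letter `m` times whose tail starts with `1 < v_{α_t}`, which creates the descent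
at `α_t`.
-/

section Sequences

variable {ℓ n : ℕ} {v w : ℕ → ℕ}

theorem des_congr (h : ∀ i ∈ Icc 1 ℓ, v i = w i) : Des ℓ v = Des ℓ w := by
  ext i
  simp only [Des, Set.mem_ofPred_eq]
  constructor <;> rintro ⟨h1, h2, h3⟩ <;> refine ⟨h1, h2, ?_⟩
  · rwa [← h i (by rw [mem_Icc]; omega), ← h (i + 1) (by rw [mem_Icc]; omega)]
  · rwa [h i (by rw [mem_Icc]; omega), h (i + 1) (by rw [mem_Icc]; omega)]

theorem mult_congr (h : ∀ i ∈ Icc 1 ℓ, v i = w i) : mult ℓ v = mult ℓ w := by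
  ext j
  exact congrArg card (filter_congr fun i hi => by rw [h i hi])

theorem des_eq_filter : Des ℓ v = ↑{i ∈ Ico 1 ℓ | v (i + 1) < v i} := by
  ext i
  simp [Des, and_assoc]

theorem sum_mult_eq (hv : ∀ i ∈ Icc 1 ℓ, v i ∈ Icc 1 n) : ∑ j ∈ Icc 1 n, mult ℓ v j = ℓ := by
  simpa [mult] using (card_eq_sum_card_fiberwise hv).symm

theorem mult_eq_zero_of_notMem (hv : v ∈ Seqs ℓ n) {j : ℕ} (hj : j ∉ Icc 1 n) :
    mult ℓ v j = 0 :=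
  card_eq_zero.2 <| filter_eq_empty_iff.2 fun i hi hij => hj (hij ▸ hv.1 i hi)

/-- The last term makes the bound inductive in `ℓ`: appending the letter `j` creates a descent
only after a letter larger than `j`. -/
theorem mult_add_card_des_add_ite_le (hℓ : 1 ≤ ℓ) (j : ℕ) :
    mult ℓ v j + #{i ∈ Ico 1 ℓ | v (i + 1) < v i} + (if j < v ℓ then 1 else 0) ≤ ℓ := by
  simp only [mult, card_filter]
  induction ℓ, hℓ using Nat.le_induction with
  | base => simp only [Icc_self, sum_singleton, Ico_self, sum_empty]; split_ifs <;> omega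
  | succ ℓ hℓ ih =>
    rw [sum_Icc_succ_top (by omega), sum_Ico_succ_top hℓ]
    split_ifs at ih ⊢ <;> omega

theorem mult_add_card_add_ite_le (hℓ : 1 ≤ ℓ) {D : Finset ℕ} (hD : Des ℓ v = ↑D) (j : ℕ) :
    mult ℓ v j + #D + (if j < v ℓ then 1 else 0) ≤ ℓ := by
  rw [des_eq_filter, coe_inj] at hD
  exact hD ▸ mult_add_card_des_add_ite_le hℓ j

end Sequences

section Words

variable {ℓ L n : ℕ} {v w w' : ℕ → ℕ}

def lettersIoc (w : ℕ → ℕ) (a b : ℕ) : List ℕ := (List.range' (a + 1) (b - a)).map w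

theorem count_lettersIoc (w : ℕ → ℕ) (a b j : ℕ) :
    (lettersIoc w a b).count j = #{i ∈ Ioc a b | w i = j} := by
  rw [← Multiset.coe_count, lettersIoc, ← Multiset.map_coe, Multiset.count_map, card_def,
    filter_val]
  simp only [eq_comm]
  rfl

theorem sortedLE_lettersIoc {a b : ℕ} (h : ∀ i, a < i → i < b → w i ≤ w (i + 1)) :
    (lettersIoc w a b).SortedLE := by
  have hmono : MonotoneOn w (Set.Icc (a + 1) b) :=
    monotoneOn_of_le_succ Set.ordConnected_Icc fun i _ hi hi' => h i hi.1 hi'.2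
  have hmem {i : ℕ} (hi : i ∈ List.range' (a + 1) (b - a)) : i ∈ Set.Icc (a + 1) b := by
    rw [List.mem_range'_1] at hi
    exact ⟨hi.1, by omega⟩
  exact (List.pairwise_map.2 (List.pairwise_le_range'.imp_of_mem fun hi hj hij =>
    hmono (hmem hi) (hmem hj) hij)).sortedLE

theorem getD_lettersIoc {a b i : ℕ} (h₁ : a < i) (h₂ : i ≤ b) :
    (lettersIoc w a b).getD (i - (a + 1)) 0 = w i := by
  rw [List.getD_eq_getElem _ _ (by rw [lettersIoc, List.length_map, List.length_range']; omega)]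
  simp only [lettersIoc, List.getElem_map, List.getElem_range']
  congr
  omega

theorem mult_eq_mult_add_count_lettersIoc (h : ℓ ≤ L) (j : ℕ) :
    mult L w j = mult ℓ w j + (lettersIoc w ℓ L).count j := by
  have hsplit : Icc 1 L = Icc 1 ℓ ∪ Ioc ℓ L := by
    ext
    simp only [mem_union, mem_Icc, mem_Ioc]
    omega
  have hdisj : Disjoint (Icc 1 ℓ) (Ioc ℓ L) := disjoint_left.2 fun i hi hi' => by
    rw [mem_Icc] at hi
    rw [mem_Ioc] at hi'
    omega
  rw [count_lettersIoc, mult, mult, hsplit, filter_union,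
    card_union_of_disjoint (disjoint_filter_filter hdisj)]

theorem eq_of_monotone_tail (hℓL : ℓ ≤ L) (hpre : ∀ i ≤ ℓ, w i = w' i)
    (hw : ∀ i, ℓ < i → i < L → w i ≤ w (i + 1)) (hw' : ∀ i, ℓ < i → i < L → w' i ≤ w' (i + 1))
    (hmult : ∀ j, mult L w j = mult L w' j) : ∀ i ≤ L, w i = w' i := by
  have hcount (j : ℕ) : (lettersIoc w ℓ L).count j = (lettersIoc w' ℓ L).count j := by
    have := hmult j
    rw [mult_eq_mult_add_count_lettersIoc hℓL, mult_eq_mult_add_count_lettersIoc hℓL,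
      mult_congr fun i hi => hpre i (mem_Icc.1 hi).2] at this
    omega
  have hletters := (List.perm_iff_count.2 hcount).eq_of_sortedLE
    (sortedLE_lettersIoc hw) (sortedLE_lettersIoc hw')
  intro i hi
  rcases le_or_gt i ℓ with h | h
  · exact hpre i h
  · rw [← getD_lettersIoc (w := w) h hi, ← getD_lettersIoc (w := w') h hi, hletters]

def appendList (v : ℕ → ℕ) (ℓ : ℕ) (S : List ℕ) (i : ℕ) : ℕ :=
  if i ≤ ℓ then v i else S.getD (i - (ℓ + 1)) 0

theorem lettersIoc_appendList (S : List ℕ) :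
    lettersIoc (appendList v ℓ S) ℓ (ℓ + S.length) = S := by
  apply List.ext_getElem (by simp [lettersIoc])
  intro k _ hk
  simp only [lettersIoc, List.getElem_map, List.getElem_range', appendList]
  rw [if_neg (by omega)]
  simp [hk]

theorem mult_appendList (S : List ℕ) (j : ℕ) :
    mult (ℓ + S.length) (appendList v ℓ S) j = mult ℓ v j + S.count j := by
  rw [mult_eq_mult_add_count_lettersIoc (Nat.le_add_right ℓ _), lettersIoc_appendList,
    mult_congr (v := appendList v ℓ S) (w := v) fun i hi => if_pos (mem_Icc.1 hi).2]

theorem appendList_mem_seqs {S : List ℕ} (hv : v ∈ Seqs ℓ n) (hS : ∀ x ∈ S, x ∈ Icc 1 n) :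
    appendList v ℓ S ∈ Seqs (ℓ + S.length) n := by
  refine ⟨fun i hi => ?_, fun i hi => ?_⟩ <;> simp only [appendList] <;> split_ifs with h
  · exact hv.1 i (by rw [mem_Icc] at hi ⊢; omega)
  · simp only [mem_Icc] at hi
    rw [List.getD_eq_getElem _ _ (by omega)]
    exact hS _ (List.getElem_mem _)
  · exact hv.2 i (by rw [mem_Icc] at hi ⊢; omega)
  · rw [mem_Icc] at hi
    rw [List.getD_eq_default _ _ (by omega)]

theorem des_appendList {S : List ℕ} (hℓ : 1 ≤ ℓ) (hS : S.SortedLE) (hlt : ∃ x ∈ S, x < v ℓ) :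
    Des (ℓ + S.length) (appendList v ℓ S) = insert ℓ (Des ℓ v) := by
  obtain ⟨x, hx, hxv⟩ := hlt
  have hpos : 0 < S.length := List.length_pos_of_mem hx
  have hhead : S[0] < v ℓ := by
    obtain ⟨k, hk, rfl⟩ := List.getElem_of_mem hx
    exact (hS.getElem_le_getElem_of_le (Nat.zero_le k)).trans_lt hxv
  ext i
  simp only [Des, appendList, Set.mem_insert_iff, Set.mem_ofPred_eq]
  rcases lt_trichotomy i ℓ with h | rfl | h
  · simp [h, h.le, Nat.succ_le_of_lt h, h.ne, h.trans_le (Nat.le_add_right _ _)]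
  · simp [hℓ, hpos, hhead]
  · have hle : ∀ hi : i + 1 - (ℓ + 1) < S.length,
        S.getD (i - (ℓ + 1)) 0 ≤ S[i + 1 - (ℓ + 1)] := fun hi => by
      rw [List.getD_eq_getElem _ _ (by omega)]
      exact hS.getElem_le_getElem_of_le (by omega)
    simp only [h.ne', false_or, show ¬ i ≤ ℓ by omega, show ¬ i + 1 ≤ ℓ by omega, if_false]
    constructor
    · rintro ⟨-, hi, hdes⟩
      rw [List.getD_eq_getElem _ _ (by omega)] at hdes
      exact absurd (hle (by omega)) (not_le.2 hdes)
    · rintro ⟨-, hi, -⟩; omega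

def truncate (ℓ : ℕ) (w : ℕ → ℕ) (i : ℕ) : ℕ := if i ≤ ℓ then w i else 0

theorem truncate_mem_seqs (hw : w ∈ Seqs L n) (h : ℓ ≤ L) : truncate ℓ w ∈ Seqs ℓ n := by
  refine ⟨fun i hi => ?_, fun i hi => ?_⟩ <;> simp only [truncate] <;> rw [mem_Icc] at hi
  · rw [if_pos hi.2]
    exact hw.1 i (by rw [mem_Icc]; omega)
  · split_ifs with h'
    · exact hw.2 i (by rw [mem_Icc]; omega)
    · rfl

theorem des_truncate (h : ℓ ≤ L) : Des ℓ (truncate ℓ w) = Des L w ∩ Set.Iio ℓ := by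
  rw [des_congr (v := truncate ℓ w) (w := w) fun i hi => if_pos (mem_Icc.1 hi).2]
  ext i
  simp only [Des, Set.mem_inter_iff, Set.mem_Iio, Set.mem_ofPred_eq]
  constructor
  · rintro ⟨h1, h2, h3⟩; exact ⟨⟨h1, by omega, h3⟩, h2⟩
  · rintro ⟨⟨h1, -, h3⟩, h2⟩; exact ⟨h1, h2, h3⟩

theorem truncate_appendList (hv : v ∈ Seqs ℓ n) (S : List ℕ) :
    truncate ℓ (appendList v ℓ S) = v := by
  ext i
  simp only [truncate, appendList]
  split_ifs with h
  · rfl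
  · exact (hv.2 i (by rw [mem_Icc]; omega)).symm

end Words

section MonotoneWord

variable {n : ℕ} {a : ℕ → ℕ}

def monotoneWord (n : ℕ) (a : ℕ → ℕ) : List ℕ :=
  (∑ j ∈ Icc 1 n, Multiset.replicate (a j) j).sort

theorem sortedLE_monotoneWord : (monotoneWord n a).SortedLE :=
  (Multiset.pairwise_sort _ _).sortedLE

theorem count_monotoneWord (j : ℕ) :
    (monotoneWord n a).count j = if j ∈ Icc 1 n then a j else 0 := by
  rw [← Multiset.coe_count, monotoneWord, Multiset.sort_eq, Multiset.count_sum']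
  simp [Multiset.count_replicate]

theorem mem_Icc_of_mem_monotoneWord {x : ℕ} (hx : x ∈ monotoneWord n a) : x ∈ Icc 1 n := by
  have := List.count_pos_iff.2 hx
  rw [count_monotoneWord] at this
  split_ifs at this with h
  · exact h
  · omega

theorem length_monotoneWord : (monotoneWord n a).length = ∑ j ∈ Icc 1 n, a j := by
  rw [← Multiset.coe_card, monotoneWord, Multiset.sort_eq, Multiset.card_sum]
  simp

end MonotoneWord

section Truncation

variable {I : Finset ℕ} {ℓ L n m : ℕ} {v w : ℕ → ℕ}

theorem monotone_tail_of_des_eq (hI : ∀ x ∈ I, x ≤ ℓ) (hdes : Des L w = ↑I) :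
    ∀ i, ℓ < i → i < L → w i ≤ w (i + 1) := by
  intro i hi hiL
  by_contra h
  have : i ∈ Des L w := ⟨by omega, hiL, not_le.1 h⟩
  rw [hdes, mem_coe] at this
  exact absurd (hI i this) (not_le.2 hi)

theorem truncate_mem_of_des_eq (hℓ : ℓ ∈ I) (hI : ∀ x ∈ I, x ≤ ℓ) (hw : w ∈ Seqs L n)
    (hdes : Des L w = ↑I) :
    truncate ℓ w ∈ Seqs ℓ n ∧ Des ℓ (truncate ℓ w) = ↑(I.erase ℓ) ∧ truncate ℓ w ℓ ≠ 1 := by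
  obtain ⟨hℓpos, hℓL, hdrop⟩ : ℓ ∈ Des L w := hdes ▸ mem_coe.2 hℓ
  have hnext : 1 ≤ w (ℓ + 1) := (mem_Icc.1 (hw.1 _ (by rw [mem_Icc]; omega))).1
  refine ⟨truncate_mem_seqs hw hℓL.le, ?_, ?_⟩
  · rw [des_truncate hℓL.le, hdes]
    ext i
    simp only [Set.mem_inter_iff, mem_coe, Set.mem_Iio, coe_erase, Set.mem_sdiff,
      Set.mem_singleton_iff]
    exact ⟨fun h => ⟨h.1, h.2.ne⟩, fun h => ⟨h.1, lt_of_le_of_ne (hI i h.1) h.2⟩⟩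
  · simp only [truncate, le_refl, if_true]
    omega

theorem injOn_truncate (hℓ : ℓ ∈ I) (hI : ∀ x ∈ I, x ≤ ℓ) :
    Set.InjOn (truncate ℓ)
      {w ∈ Seqs L n | Des L w = ↑I ∧ ∀ j ∈ Icc 1 n, mult L w j = m} := by
  rintro w ⟨hw, hwdes, hwm⟩ w' ⟨hw', hw'des, hw'm⟩ htr
  have hℓL : ℓ < L := (hwdes ▸ mem_coe.2 hℓ : ℓ ∈ Des L w).2.1
  have hpre (i : ℕ) (hi : i ≤ ℓ) : w i = w' i := by simpa [truncate, hi] using congrFun htr i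
  have hmult (j : ℕ) : mult L w j = mult L w' j := by
    by_cases hj : j ∈ Icc 1 n
    · rw [hwm j hj, hw'm j hj]
    · rw [mult_eq_zero_of_notMem hw hj, mult_eq_zero_of_notMem hw' hj]
  have heq := eq_of_monotone_tail hℓL.le hpre (monotone_tail_of_des_eq hI hwdes)
    (monotone_tail_of_des_eq hI hw'des) hmult
  ext i
  rcases le_or_gt i L with hi | hi
  · exact heq i hi
  · rw [hw.2 i (by rw [mem_Icc]; omega), hw'.2 i (by rw [mem_Icc]; omega)]

theorem exists_appendList_of_des_eq (hℓ : ℓ ∈ I) (hℓpos : 1 ≤ ℓ) (hm : ℓ < m + #I)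
    (hv : v ∈ Seqs ℓ n) (hdes : Des ℓ v = ↑(I.erase ℓ)) (hv1 : v ℓ ≠ 1) :
    ∃ w, (w ∈ Seqs (n * m) n ∧ Des (n * m) w = ↑I ∧ ∀ j ∈ Icc 1 n, mult (n * m) w j = m) ∧
      truncate ℓ w = v := by
  have hvℓ := mem_Icc.1 (hv.1 ℓ (by simp [hℓpos]))
  have hbound (j : ℕ) := mult_add_card_add_ite_le hℓpos hdes j
  have hIpos : 1 ≤ #I := card_pos.2 ⟨ℓ, hℓ⟩
  rw [card_erase_of_mem hℓ] at hbound
  have hle (j : ℕ) : mult ℓ v j ≤ m := by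
    have := hbound j
    split_ifs at this <;> omega
  have hlt : mult ℓ v 1 < m := by
    have := hbound 1
    rw [if_pos (by omega)] at this
    omega
  set S := monotoneWord n fun j => m - mult ℓ v j
  have hlen : ℓ + S.length = n * m := by
    have hsum : ∑ j ∈ Icc 1 n, mult ℓ v j ≤ ∑ _j ∈ Icc 1 n, m := sum_le_sum fun j _ => hle j
    rw [sum_mult_eq hv.1, sum_const, Nat.card_Icc, Nat.add_sub_cancel, smul_eq_mul] at hsum
    rw [length_monotoneWord, sum_tsub_distrib _ fun j _ => hle j, sum_mult_eq hv.1, sum_const,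
      Nat.card_Icc, Nat.add_sub_cancel, smul_eq_mul]
    omega
  have h1S : 1 ∈ S := List.count_pos_iff.1 (by
    rw [count_monotoneWord, if_pos (by rw [mem_Icc]; omega)]
    omega)
  refine ⟨appendList v ℓ S, ?_, truncate_appendList hv S⟩
  rw [← hlen]
  refine ⟨appendList_mem_seqs hv fun x hx => mem_Icc_of_mem_monotoneWord hx, ?_, fun j hj => ?_⟩
  · rw [des_appendList hℓpos sortedLE_monotoneWord ⟨1, h1S, by omega⟩, hdes, ← coe_insert,
      insert_erase hℓ]
  · rw [mult_appendList, count_monotoneWord, if_pos hj]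
    have := hle j
    omega

end Truncation

theorem stmt_2_general (I : Finset ℕ) (hI : I.Nonempty) (hIpos : ∀ x ∈ I, 1 ≤ x)
    (n : ℕ) (m : ℕ) (hm : I.sup id - I.card + 1 ≤ m) :
    dP m I n = Ncount I n := by
  obtain ⟨a, ha, hsup⟩ := exists_mem_eq_sup I hI id
  set ℓ := I.sup id
  have hℓ : ℓ ∈ I := hsup ▸ ha
  have hle (x : ℕ) (hx : x ∈ I) : x ≤ ℓ := le_sup (f := id) hx
  have hcard : #I ≤ ℓ := by
    simpa using card_le_card fun x hx => mem_Icc.2 ⟨hIpos x hx, hle x hx⟩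
  refine Set.BijOn.ncard_eq ⟨fun w hw => truncate_mem_of_des_eq hℓ hle hw.1 hw.2.1,
    injOn_truncate hℓ hle, fun v hv => ?_⟩
  exact exists_appendList_of_des_eq hℓ (hIpos ℓ hℓ) (by omega) hv.1 hv.2.1 hv.2.2

/-- for every positive integer `n` and every `m ≥ α_t - t + 1`,
`𝔡^m(I,n) = N(I,n)`. -/
theorem stmt_2 (I : Finset ℕ) (hI : I.Nonempty) (hIpos : ∀ x ∈ I, 1 ≤ x)
    (n : ℕ) (hn : 1 ≤ n) (m : ℕ) (hm : I.sup id - I.card + 1 ≤ m) :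
    dP m I n = Ncount I n :=
  stmt_2_general I hI hIpos n m hm
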